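/- For ν > 1, the function f(ν) = (ν/2)·ln((ν+1)/(ν-1)) is strictly decreasing on (1, ∞) and satisfies f(ν) > 1 for all ν > 1. -/
import Mathlib

open Real Set

lemma key_lower {t : ℝ} (ht0 : 0 < t) (ht1 : t < 1) :
    2 * t < Real.log (1 + t) - Real.log (1 - t) := by
  have hmono : StrictMonoOn (fun t : ℝ => Real.log (1 + t) - Real.log (1 - t) - 2 * t)
      (Set.Ico 0 1) := by
    apply strictMonoOn_of_deriv_pos (convex_Ico 0 1)
    · apply ContinuousOn.sub
      · apply ContinuousOn.sub
        · exact ContinuousOn.log (by fun_prop)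
            (fun x hx => ne_of_gt (by simp only [Set.mem_Ico] at hx; linarith [hx.1]))
        · exact ContinuousOn.log (by fun_prop)
            (fun x hx => ne_of_gt (by simp only [Set.mem_Ico] at hx; linarith [hx.2]))
      · fun_prop
    · intro x hx
      rw [interior_Ico] at hx
      obtain ⟨hx0, hx1⟩ := hx
      have h1 : HasDerivAt (fun t : ℝ => Real.log (1 + t)) (1 / (1 + x)) x := by
        have := ((hasDerivAt_id x).const_add 1).log (ne_of_gt (by simp only [id_eq]; linarith))
        simpa using this
      have h2 : HasDerivAt (fun t : ℝ => Real.log (1 - t)) ((-1) / (1 - x)) x := by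
        have := ((hasDerivAt_id x).const_sub 1).log (ne_of_gt (by simp only [id_eq]; linarith))
        simpa using this
      have h3 : HasDerivAt (fun t : ℝ => 2 * t) 2 x := by
        simpa using (hasDerivAt_id x).const_mul 2
      have h : HasDerivAt (fun t : ℝ => Real.log (1 + t) - Real.log (1 - t) - 2 * t)
          (1 / (1 + x) - (-1) / (1 - x) - 2) x := (h1.sub h2).sub h3
      rw [h.deriv]
      have hp : 0 < 1 + x := by linarith
      have hm : 0 < 1 - x := by linarith
      rw [div_sub_div _ _ (ne_of_gt hp) (ne_of_gt hm)]
      rw [sub_pos, lt_div_iff₀ (by positivity)]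
      ring_nf
      nlinarith
  have := hmono (Set.mem_Ico.mpr ⟨le_refl 0, one_pos⟩)
    (Set.mem_Ico.mpr ⟨le_of_lt ht0, ht1⟩) ht0
  simp only [add_zero, sub_zero, Real.log_one, mul_zero] at this
  linarith

lemma key_upper {t : ℝ} (ht0 : 0 < t) (ht1 : t < 1) :
    Real.log (1 + t) - Real.log (1 - t) < 2 * t / (1 - t ^ 2) := by
  have hmono : StrictMonoOn
      (fun t : ℝ => 2 * t / (1 - t ^ 2) - (Real.log (1 + t) - Real.log (1 - t)))
      (Set.Ico 0 1) := by
    apply strictMonoOn_of_deriv_pos (convex_Ico 0 1)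
    · apply ContinuousOn.sub
      · apply ContinuousOn.div
        · fun_prop
        · fun_prop
        · intro x hx
          simp only [Set.mem_Ico] at hx
          nlinarith [hx.1, hx.2]
      · apply ContinuousOn.sub
        · exact ContinuousOn.log (by fun_prop)
            (fun x hx => ne_of_gt (by simp only [Set.mem_Ico] at hx; linarith [hx.1]))
        · exact ContinuousOn.log (by fun_prop)
            (fun x hx => ne_of_gt (by simp only [Set.mem_Ico] at hx; linarith [hx.2]))
    · intro x hx
      rw [interior_Ico] at hx
      obtain ⟨hx0, hx1⟩ := hx
      have hden : (1 : ℝ) - x ^ 2 ≠ 0 := by nlinarith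
      have hnum : HasDerivAt (fun t : ℝ => 2 * t) 2 x := by
        simpa using (hasDerivAt_id x).const_mul 2
      have hd : HasDerivAt (fun t : ℝ => 1 - t ^ 2) (-(2 * x)) x := by
        have := (hasDerivAt_pow 2 x).const_sub 1
        simpa using this
      have hdiv : HasDerivAt (fun t : ℝ => 2 * t / (1 - t ^ 2))
          ((2 * (1 - x ^ 2) - 2 * x * -(2 * x)) / (1 - x ^ 2) ^ 2) x :=
        hnum.div hd hden
      have h1 : HasDerivAt (fun t : ℝ => Real.log (1 + t)) (1 / (1 + x)) x := by
        have := ((hasDerivAt_id x).const_add 1).log (ne_of_gt (by simp only [id_eq]; linarith))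
        simpa using this
      have h2 : HasDerivAt (fun t : ℝ => Real.log (1 - t)) ((-1) / (1 - x)) x := by
        have := ((hasDerivAt_id x).const_sub 1).log (ne_of_gt (by simp only [id_eq]; linarith))
        simpa using this
      have h : HasDerivAt
          (fun t : ℝ => 2 * t / (1 - t ^ 2) - (Real.log (1 + t) - Real.log (1 - t)))
          ((2 * (1 - x ^ 2) - 2 * x * -(2 * x)) / (1 - x ^ 2) ^ 2
            - (1 / (1 + x) - (-1) / (1 - x))) x := hdiv.sub (h1.sub h2)
      rw [h.deriv]
      have hp : 0 < 1 + x := by linarith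
      have hm : 0 < 1 - x := by linarith
      have h1x : (1 : ℝ) - x ^ 2 = (1 + x) * (1 - x) := by ring
      rw [sub_pos, div_sub_div _ _ (ne_of_gt hp) (ne_of_gt hm),
        div_lt_div_iff₀ (by positivity) (by positivity)]
      nlinarith [mul_pos hp hm, mul_pos (mul_pos hp hm) (mul_pos hx0 hx0), sq_nonneg x]
  have := hmono (Set.mem_Ico.mpr ⟨le_refl 0, one_pos⟩)
    (Set.mem_Ico.mpr ⟨le_of_lt ht0, ht1⟩) ht0
  simp only [add_zero, sub_zero, Real.log_one, mul_zero, zero_div] at this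
  linarith [this]

lemma log_sandwich {ν : ℝ} (hν : 1 < ν) :
    2 / ν < Real.log ((ν + 1) / (ν - 1)) ∧
    Real.log ((ν + 1) / (ν - 1)) < 2 * ν / (ν ^ 2 - 1) := by
  have hν0 : 0 < ν := by linarith
  have ht0 : 0 < 1 / ν := by positivity
  have ht1 : 1 / ν < 1 := by rw [div_lt_one hν0]; linarith
  have hp1 : (0:ℝ) < ν + 1 := by linarith
  have hm1 : (0:ℝ) < ν - 1 := by linarith
  have e1 : 1 + 1 / ν = (ν + 1) / ν := by field_simp
  have e2 : 1 - 1 / ν = (ν - 1) / ν := by field_simp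
  have elog : Real.log (1 + 1 / ν) - Real.log (1 - 1 / ν)
      = Real.log ((ν + 1) / (ν - 1)) := by
    rw [e1, e2, Real.log_div (ne_of_gt hp1) (ne_of_gt hν0),
      Real.log_div (ne_of_gt hm1) (ne_of_gt hν0),
      Real.log_div (ne_of_gt hp1) (ne_of_gt hm1)]
    ring
  constructor
  · have := key_lower ht0 ht1
    rw [elog] at this
    calc 2 / ν = 2 * (1 / ν) := by ring
    _ < _ := this
  · have := key_upper ht0 ht1
    rw [elog] at this
    have e3 : 2 * (1 / ν) / (1 - (1 / ν) ^ 2) = 2 * ν / (ν ^ 2 - 1) := by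
      rw [div_eq_div_iff]
      · field_simp
      · have : (1 / ν) ^ 2 < 1 := by nlinarith
        linarith
      · nlinarith
    rw [e3] at this
    exact this

theorem me_packet_exponent_decreasing_gt_one :
    StrictAntiOn (fun ν : ℝ => ν / 2 * Real.log ((ν + 1) / (ν - 1))) (Set.Ioi 1) ∧
    ∀ ν : ℝ, 1 < ν → 1 < ν / 2 * Real.log ((ν + 1) / (ν - 1)) := by
  constructor
  · apply strictAntiOn_of_deriv_neg (convex_Ioi 1)
    · apply ContinuousOn.mul
      · fun_prop
      · apply ContinuousOn.log
        · apply ContinuousOn.div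
          · fun_prop
          · fun_prop
          · intro x hx
            simp only [Set.mem_Ioi] at hx
            intro h; rw [sub_eq_zero] at h; linarith
        · intro x hx
          simp only [Set.mem_Ioi] at hx
          exact ne_of_gt (div_pos (by linarith) (by linarith))
    · intro x hx
      rw [interior_Ioi] at hx
      simp only [Set.mem_Ioi] at hx
      have hp1 : (0:ℝ) < x + 1 := by linarith
      have hm1 : (0:ℝ) < x - 1 := by linarith
      have hu : HasDerivAt (fun ν : ℝ => (ν + 1) / (ν - 1))
          ((1 * (x - 1) - (x + 1) * 1) / (x - 1) ^ 2) x := by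
        exact (((hasDerivAt_id x).add_const 1).div ((hasDerivAt_id x).sub_const 1)
          (ne_of_gt hm1))
      have hlog : HasDerivAt (fun ν : ℝ => Real.log ((ν + 1) / (ν - 1)))
          ((1 * (x - 1) - (x + 1) * 1) / (x - 1) ^ 2 / ((x + 1) / (x - 1))) x :=
        hu.log (ne_of_gt (div_pos hp1 hm1))
      have hhalf : HasDerivAt (fun ν : ℝ => ν / 2) (1 / 2 : ℝ) x := by
        simpa using (hasDerivAt_id x).div_const 2
      have h : HasDerivAt (fun ν : ℝ => ν / 2 * Real.log ((ν + 1) / (ν - 1)))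
          (1 / 2 * Real.log ((x + 1) / (x - 1))
            + x / 2 * ((1 * (x - 1) - (x + 1) * 1) / (x - 1) ^ 2 / ((x + 1) / (x - 1)))) x :=
        hhalf.mul hlog
      rw [h.deriv]
      have hud : (1 * (x - 1) - (x + 1) * 1) / (x - 1) ^ 2 / ((x + 1) / (x - 1))
          = -2 / (x ^ 2 - 1) := by
        have h3 : x ^ 2 - 1 ≠ 0 := by nlinarith
        field_simp
        ring
      rw [hud]
      have hs := (log_sandwich hx).2
      have hden : (0:ℝ) < x ^ 2 - 1 := by nlinarith
      have : x / 2 * (-2 / (x ^ 2 - 1)) = -(x / (x ^ 2 - 1)) := by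
        field_simp
      rw [this]
      have : 1 / 2 * Real.log ((x + 1) / (x - 1)) < 1 / 2 * (2 * x / (x ^ 2 - 1)) := by
        linarith
      have h2 : 1 / 2 * (2 * x / (x ^ 2 - 1)) = x / (x ^ 2 - 1) := by ring
      linarith [this, h2 ▸ this]
  · intro ν hν
    have hs := (log_sandwich hν).1
    have hν0 : 0 < ν := by linarith
    have hne := hν0.ne'
    calc (1:ℝ) = ν / 2 * (2 / ν) := by field_simp
    _ < ν / 2 * Real.log ((ν + 1) / (ν - 1)) := by
        apply mul_lt_mul_of_pos_left hs (by positivity)
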